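/- arXiv:2412.09107 — 6 statements merged into one kernel-verified Lean document; each statement's English description precedes it below -/
import Mathlib

section
/- Let $d, q \geq 2$ be integers with $\gcd(d, q) = 1$, and let $f = \mathrm{ord}_d(q)$ be the multiplicative order of $q$ modulo $d$. Suppose $v_2(d) \neq 1$. Then for every $v \mid d^\infty$ (i.e., every $v$ whose prime divisors all divide $d$), the multiplicative order of $q$ modulo $dv$ satisfies $\mathrm{ord}_{dv}(q) = \dfrac{f \cdot d v}{\gcd(q^f - 1, dv)}$. -/
/-!
Put `Q = q ^ f`, so `d ∣ Q - 1`. Every prime `p ∣ dv` divides `d`, hence `Q - 1`, and `4 ∣ Q - 1`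
as soon as `2 ∣ dv`, because then `4 ∣ d` by `v₂(d) ≠ 1`. Under exactly these conditions the
lifting-the-exponent lemma gives `v_p(Q ^ k - 1) = v_p((Q - 1) k)` for all `p ∣ dv`, so
`dv ∣ Q ^ k - 1 ↔ dv ∣ (Q - 1) k ↔ dv / gcd(Q - 1, dv) ∣ k`, which is the order of `Q` modulo `dv`.
Since `f` divides the order of `q` modulo `dv`, that order is `f` times the order of `q ^ f`.
-/

theorem padicValNat.pow_sub_one_of_four_dvd {Q k : ℕ} (hQ : 1 < Q) (h4 : 4 ∣ Q - 1)
    (hk : k ≠ 0) :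
    padicValNat 2 (Q ^ k - 1) = padicValNat 2 (Q - 1) + padicValNat 2 k := by
  have hQk : 1 < Q ^ k := Nat.one_lt_pow hk hQ
  have hodd : ¬ (2 : ℤ) ∣ Q := by
    have : ¬ 2 ∣ Q := fun h2 => by omega
    exact_mod_cast this
  have h4' : (4 : ℤ) ∣ (Q : ℤ) - 1 := by
    have := Int.natCast_dvd_natCast.mpr h4
    rwa [Nat.cast_sub hQ.le, Nat.cast_one] at this
  have lte := Int.two_pow_sub_pow' k h4' hodd
  rw [one_pow, ← Nat.cast_one (R := ℤ), ← Nat.cast_pow, ← Nat.cast_sub hQk.le,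
    ← Nat.cast_sub hQ.le] at lte
  simp only [← Nat.cast_inj (R := ℕ∞), Nat.cast_add]
  rw [padicValNat_eq_emultiplicity (by omega), padicValNat_eq_emultiplicity (by omega),
    padicValNat_eq_emultiplicity hk]
  simpa only [← Int.natCast_emultiplicity, Nat.cast_ofNat] using lte

theorem padicValNat.pow_sub_one_eq_sub_one_mul {p Q k : ℕ} (hp : p.Prime) (hQ : 1 < Q)
    (hk : k ≠ 0) (hpQ : p ∣ Q - 1) (h4 : p = 2 → 4 ∣ Q - 1) :
    padicValNat p (Q ^ k - 1) = padicValNat p ((Q - 1) * k) := by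
  have := Fact.mk hp
  rw [padicValNat.mul (by omega) hk]
  rcases hp.eq_two_or_odd' with rfl | hodd
  · exact padicValNat.pow_sub_one_of_four_dvd hQ (h4 rfl) hk
  · have hpQ' : ¬ p ∣ Q := fun h => hp.one_lt.ne'
      (Nat.dvd_one.mp ((Nat.dvd_sub_iff_right hQ.le h).mp hpQ))
    simpa using padicValNat.pow_sub_pow hodd hQ (by simpa using hpQ) hpQ' hk

theorem Nat.dvd_iff_dvd_of_padicValNat_eq {N a b : ℕ} (ha : a ≠ 0) (hb : b ≠ 0)
    (h : ∀ p, p.Prime → p ∣ N → padicValNat p a = padicValNat p b) : N ∣ a ↔ N ∣ b := by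
  rcases eq_or_ne N 0 with rfl | hN
  · simp [ha, hb]
  rw [← Nat.factorization_prime_le_iff_dvd hN ha, ← Nat.factorization_prime_le_iff_dvd hN hb]
  refine forall₂_congr fun p hp => ?_
  by_cases hpN : p ∣ N
  · rw [Nat.factorization_def a hp, Nat.factorization_def b hp, h p hp hpN]
  · simp [Nat.factorization_eq_zero_of_not_dvd hpN]

theorem Nat.div_gcd_dvd_iff_dvd_mul {a N k : ℕ} (hN : N ≠ 0) :
    N / a.gcd N ∣ k ↔ N ∣ a * k := by
  have hg : 0 < a.gcd N := Nat.gcd_pos_of_pos_right a (Nat.pos_of_ne_zero hN)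
  have cancel_gcd : N ∣ a * k ↔ a.gcd N * (N / a.gcd N) ∣ a.gcd N * (a / a.gcd N * k) := by
    rw [Nat.mul_div_cancel' (Nat.gcd_dvd_right a N), ← mul_assoc,
      Nat.mul_div_cancel' (Nat.gcd_dvd_left a N)]
  rw [cancel_gcd, Nat.mul_dvd_mul_iff_left hg,
    (Nat.coprime_div_gcd_div_gcd hg).symm.dvd_mul_left]

theorem orderOf_eq_of_forall_pow_eq_one_iff {G : Type*} [Monoid G] {x : G} {n : ℕ}
    (h : ∀ k, x ^ k = 1 ↔ n ∣ k) : orderOf x = n :=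
  Nat.dvd_antisymm (orderOf_dvd_of_pow_eq_one ((h n).mpr dvd_rfl))
    ((h _).mp (pow_orderOf_eq_one x))

theorem ZMod.natCast_pow_eq_one_iff {N Q k : ℕ} (hQ : 0 < Q) :
    (Q : ZMod N) ^ k = 1 ↔ N ∣ Q ^ k - 1 := by
  rw [← ZMod.natCast_eq_zero_iff, Nat.cast_sub (Nat.one_le_pow k Q hQ), sub_eq_zero,
    Nat.cast_pow, Nat.cast_one]

theorem ZMod.orderOf_natCast_ne_zero {n q : ℕ} [NeZero n] (h : q.Coprime n) :
    orderOf (q : ZMod n) ≠ 0 := by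
  rw [← ZMod.coe_unitOfCoprime q h, orderOf_units]
  exact (orderOf_pos _).ne'

theorem dvd_pow_sub_one_iff_dvd_mul {N Q k : ℕ} (hQ : 0 < Q)
    (hrad : ∀ p, p.Prime → p ∣ N → p ∣ Q - 1) (h4 : 2 ∣ N → 4 ∣ Q - 1) :
    N ∣ Q ^ k - 1 ↔ N ∣ (Q - 1) * k := by
  rcases eq_or_ne k 0 with rfl | hk
  · simp
  rcases (Nat.one_le_iff_ne_zero.mpr hQ.ne').eq_or_lt with rfl | hQ1
  · simp
  refine Nat.dvd_iff_dvd_of_padicValNat_eq (by have := Nat.one_lt_pow hk hQ1; omega)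
    (mul_ne_zero (by omega) hk) fun p hp hpN => ?_
  exact padicValNat.pow_sub_one_eq_sub_one_mul hp hQ1 hk (hrad p hp hpN) fun h2 => h4 (h2 ▸ hpN)

theorem ZMod.orderOf_natCast_eq_div_gcd {N Q : ℕ} (hN : N ≠ 0) (hQ : 0 < Q)
    (hrad : ∀ p, p.Prime → p ∣ N → p ∣ Q - 1) (h4 : 2 ∣ N → 4 ∣ Q - 1) :
    orderOf (Q : ZMod N) = N / (Q - 1).gcd N :=
  orderOf_eq_of_forall_pow_eq_one_iff fun k => by
    rw [ZMod.natCast_pow_eq_one_iff hQ, dvd_pow_sub_one_iff_dvd_mul hQ hrad h4,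
      Nat.div_gcd_dvd_iff_dvd_mul hN]

theorem stmt_4_general (d q : ℕ) (hd : 2 ≤ d) (hco : Nat.Coprime d q)
    (h2 : d.factorization 2 ≠ 1) (v : ℕ) (hv : 0 < v)
    (hvd : ∀ l : ℕ, l.Prime → l ∣ v → l ∣ d) :
    orderOf ((q : ZMod (d * v))) =
      orderOf ((q : ZMod d)) * d * v /
        Nat.gcd (q ^ orderOf ((q : ZMod d)) - 1) (d * v) := by
  have : NeZero d := ⟨by omega⟩
  set f := orderOf (q : ZMod d)
  have hf : f ≠ 0 := ZMod.orderOf_natCast_ne_zero hco.symm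
  have hq : 0 < q := Nat.pos_of_ne_zero fun h => by
    rw [h, Nat.coprime_zero_right] at hco; omega
  have hdQ : d ∣ q ^ f - 1 := (ZMod.natCast_pow_eq_one_iff hq).mp (pow_orderOf_eq_one _)
  have hrad : ∀ p, p.Prime → p ∣ d * v → p ∣ q ^ f - 1 := fun p hp hpN =>
    ((hp.dvd_mul.mp hpN).elim id (hvd p hp)).trans hdQ
  have h4 : 2 ∣ d * v → 4 ∣ q ^ f - 1 := fun h2N => by
    have h2d : 2 ∣ d := (Nat.prime_two.dvd_mul.mp h2N).elim id (hvd 2 Nat.prime_two)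
    have h2pos : 1 ≤ d.factorization 2 :=
      (Nat.prime_two.pow_dvd_iff_le_factorization (by omega)).mp (by simpa using h2d)
    exact ((Nat.prime_two.pow_dvd_iff_le_factorization (k := 2) (by omega)).mpr
      (by omega)).trans hdQ
  have hfm : f ∣ orderOf (q : ZMod (d * v)) := by
    simpa using orderOf_map_dvd (ZMod.castHom (dvd_mul_right d v) (ZMod d)).toMonoidHom
      (q : ZMod (d * v))
  have hQ := ZMod.orderOf_natCast_eq_div_gcd (by positivity) (by positivity) hrad h4
  rw [Nat.cast_pow, orderOf_pow_of_dvd hf hfm] at hQ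
  rw [mul_assoc, Nat.mul_div_assoc f (Nat.gcd_dvd_right _ _), ← hQ,
    Nat.mul_div_cancel' hfm]

theorem stmt_4 (d q : ℕ) (hd : 2 ≤ d) (hq : 2 ≤ q) (hco : Nat.Coprime d q)
    (h2 : d.factorization 2 ≠ 1) (v : ℕ) (hv : 0 < v)
    (hvd : ∀ l : ℕ, l.Prime → l ∣ v → l ∣ d) :
    orderOf ((q : ZMod (d * v))) =
      orderOf ((q : ZMod d)) * d * v /
        Nat.gcd (q ^ orderOf ((q : ZMod d)) - 1) (d * v) :=
  stmt_4_general d q hd hco h2 v hv hvd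
end

section
/- Let $d, q \geq 2$ be integers with $\gcd(d, q) = 1$, $v_2(d) = 1$, $q \equiv 3 \pmod 4$, and $f = \mathrm{ord}_d(q)$ odd. Then for every $v \mid d^\infty$ with $v$ even, $\mathrm{ord}_{dv}(q) = \dfrac{2 f d v}{\gcd(q^{2f} - 1, dv)}$. -/
lemma geom_nat (a k : ℕ) (ha : 1 ≤ a) :
    a ^ k - 1 = (∑ i ∈ Finset.range k, a ^ i) * (a - 1) := by
  have h1 : 1 ≤ a ^ k := Nat.one_le_pow _ _ ha
  have := geom_sum_mul (a : ℤ) k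
  have : ((a:ℤ) ^ k - 1) = (∑ i ∈ Finset.range k, (a:ℤ) ^ i) * ((a:ℤ) - 1) := this.symm
  zify [ha, h1]
  linarith [this]

lemma lte_fact (p a k : ℕ) (hp : p.Prime) (ha : 2 ≤ a) (hpa : p ∣ a - 1)
    (h4 : p = 2 → 4 ∣ a - 1) (hk : k ≠ 0) :
    (a ^ k - 1).factorization p = (a - 1).factorization p + k.factorization p := by
  haveI : Fact p.Prime := ⟨hp⟩
  have hpa' : ¬ p ∣ a := by
    intro h
    have h1 : p ∣ a - (a-1) := Nat.dvd_sub h hpa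
    rw [Nat.sub_sub_self (by omega)] at h1
    exact hp.one_lt.ne' (Nat.eq_one_of_dvd_one h1)
  rw [Nat.factorization_def _ hp, Nat.factorization_def _ hp, Nat.factorization_def _ hp]
  rcases hp.eq_two_or_odd' with rfl | hodd
  · have h4 := h4 rfl
    rcases Nat.even_or_odd k with hke | hko
    · have key := padicValNat.pow_two_sub_pow (x := a) (y := 1) (by omega) (by simpa using hpa)
        (by simpa using hpa') hk hke
      simp only [one_pow] at key
      have hval : padicValNat 2 (a + 1) = 1 := by
        obtain ⟨j, hj⟩ := h4
        have haj : a + 1 = 2 * (2 * j + 1) := by omega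
        rw [haj, padicValNat.mul (by norm_num) (by omega)]
        rw [padicValNat.self (by norm_num), padicValNat.eq_zero_of_not_dvd (by omega)]
      omega
    · have hS : ¬ (2 ∣ ∑ i ∈ Finset.range k, a ^ i) := by
        intro h
        have haodd : a % 2 = 1 := by
          rcases Nat.even_or_odd a with he | ho
          · exact absurd (Nat.dvd_sub he.two_dvd hpa) (by rw [Nat.sub_sub_self (by omega)]; norm_num)
          · omega
        have : (∑ i ∈ Finset.range k, a ^ i) % 2 = k % 2 := by
          rw [Finset.sum_nat_mod]
          have : ∀ i ∈ Finset.range k, a ^ i % 2 = 1 := fun i _ => by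
            rw [Nat.pow_mod, haodd, one_pow]; norm_num
          rw [Finset.sum_congr rfl this]
          simp
        rw [Nat.odd_iff.mp hko] at this
        omega
      rw [geom_nat a k (by omega), padicValNat.mul (by intro h; exact hS (h ▸ dvd_zero 2)) (by omega),
        padicValNat.eq_zero_of_not_dvd hS, padicValNat.eq_zero_of_not_dvd (Nat.two_dvd_ne_zero.mpr (Nat.odd_iff.mp hko))]
      omega
  · have key := padicValNat.pow_sub_pow (p := p) hodd (x := a) (y := 1) (by omega)
      (by simpa using hpa) hpa' hk
    simpa using key

lemma cast_pow_eq_one_iff (q n k : ℕ) (hq : 1 ≤ q) :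
    ((q : ZMod n)) ^ k = 1 ↔ n ∣ q ^ k - 1 := by
  have h1 : 1 ≤ q ^ k := Nat.one_le_pow _ _ hq
  rw [show ((1:ZMod n)) = ((1:ℕ) : ZMod n) by norm_num, ← Nat.cast_pow,
    ZMod.natCast_eq_natCast_iff]
  constructor
  · intro h; exact (Nat.modEq_iff_dvd' h1).mp h.symm
  · intro h; exact ((Nat.modEq_iff_dvd' h1).mpr h).symm

lemma key_iff (m a : ℕ) (hm : 2 ≤ m) (ha : 2 ≤ a)
    (h1 : ∀ p : ℕ, p.Prime → p ∣ m → p ∣ a - 1)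
    (h4 : 2 ∣ m → 4 ∣ a - 1) (k : ℕ) :
    (a : ZMod m) ^ k = 1 ↔ m / Nat.gcd (a - 1) m ∣ k := by
  have hg : Nat.gcd (a - 1) m ∣ m := Nat.gcd_dvd_right _ _
  rw [cast_pow_eq_one_iff a m k (by omega)]
  rcases eq_or_ne k 0 with rfl | hk
  · simp
  have hN : a ^ k - 1 ≠ 0 := by
    have : 2 ≤ a ^ k := le_trans ha (Nat.le_self_pow hk a)
    omega
  have ht : m / Nat.gcd (a - 1) m ≠ 0 :=
    Nat.div_ne_zero_iff_of_dvd hg |>.mpr ⟨by omega, Nat.gcd_ne_zero_right (by omega)⟩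
  rw [← Nat.factorization_le_iff_dvd (by omega) hN,
    ← Nat.factorization_le_iff_dvd ht hk, Finsupp.le_def, Finsupp.le_def]
  have htfact : (m / Nat.gcd (a - 1) m).factorization =
      m.factorization - (Nat.gcd (a - 1) m).factorization := Nat.factorization_div hg
  have hgfact : (Nat.gcd (a - 1) m).factorization = (a-1).factorization ⊓ m.factorization :=
    Nat.factorization_gcd (by omega) (by omega)
  constructor <;> intro H p <;> have Hp := H p
  · by_cases hp : p.Prime
    · by_cases hpm : p ∣ m
      · have hlte := lte_fact p a k hp ha (h1 p hp hpm)
          (fun h => h4 (h ▸ hpm)) hk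
        rw [htfact, hgfact]
        simp only [Finsupp.tsub_apply, Finsupp.inf_apply]
        omega
      · rw [htfact, hgfact]
        simp only [Finsupp.tsub_apply, Finsupp.inf_apply]
        rw [Nat.factorization_eq_zero_of_not_dvd hpm]
        omega
    · rw [htfact]
      simp only [Finsupp.tsub_apply]
      rw [Nat.factorization_eq_zero_of_not_prime _ hp]
      omega
  · by_cases hp : p.Prime
    · by_cases hpm : p ∣ m
      · have hlte := lte_fact p a k hp ha (h1 p hp hpm)
          (fun h => h4 (h ▸ hpm)) hk
        rw [htfact, hgfact] at Hp
        simp only [Finsupp.tsub_apply, Finsupp.inf_apply] at Hp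
        omega
      · rw [Nat.factorization_eq_zero_of_not_dvd hpm]
        omega
    · rw [Nat.factorization_eq_zero_of_not_prime _ hp]
      omega

lemma pow_mod4 (q n : ℕ) (hq : q % 4 = 3) (hn : Odd n) : q ^ n % 4 = 3 := by
  obtain ⟨j, rfl⟩ := hn
  have h9 : (q^2) ^ j % 4 = 1 := by
    rw [Nat.pow_mod, Nat.pow_mod q, hq]
    norm_num
  rw [pow_add, pow_mul, pow_one, Nat.mul_mod, h9, hq]

theorem stmt_5 (d q : ℕ) (hd : 2 ≤ d) (hq : 2 ≤ q) (hco : Nat.Coprime d q)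
    (h2 : d.factorization 2 = 1) (hq4 : q % 4 = 3)
    (hf : Odd (orderOf ((q : ZMod d)))) (v : ℕ) (hv : 0 < v)
    (hvd : ∀ l : ℕ, l.Prime → l ∣ v → l ∣ d) (hveven : 2 ∣ v) :
    orderOf ((q : ZMod (d * v))) =
      2 * orderOf ((q : ZMod d)) * d * v /
        Nat.gcd (q ^ (2 * orderOf ((q : ZMod d))) - 1) (d * v) := by
  set f := orderOf ((q : ZMod d)) with hfdef
  have hf0 : f ≠ 0 := by rcases hf with ⟨j, hj⟩; omega
  set m := d * v with hmdef
  have hm2 : 2 ≤ m := le_trans hd (Nat.le_mul_of_pos_right d hv)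
  have h2d : 2 ∣ d := Nat.dvd_of_factorization_pos (by omega)
  have h4m : 4 ∣ m := by
    have : (2*2 : ℕ) ∣ d * v := mul_dvd_mul h2d hveven
    simpa using this
  -- d divides q^f - 1
  have hdq : d ∣ q ^ f - 1 :=
    (cast_pow_eq_one_iff q d f (by omega)).mp (pow_orderOf_eq_one _)
  set a := q ^ (2 * f) with hadef
  have ha2 : 2 ≤ a := le_trans hq (Nat.le_self_pow (by omega) q)
  have hqf1 : 1 ≤ q ^ f := Nat.one_le_pow _ _ (by omega)
  have hfa : q ^ f - 1 ∣ a - 1 := by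
    have h := Nat.sub_dvd_pow_sub_pow (q ^ f) 1 2
    simpa [← pow_mul, mul_comm f 2] using h
  have hda : d ∣ a - 1 := hdq.trans hfa
  have hq4f : q ^ f % 4 = 3 := pow_mod4 q f hq4 hf
  have h4a : 4 ∣ a - 1 := by
    have hsq : a - 1 = (q ^ f + 1) * (q ^ f - 1) := by
      have : a = (q ^ f) ^ 2 := by rw [hadef, ← pow_mul, mul_comm]
      rw [this]
      have := Nat.sq_sub_sq (q ^ f) 1
      simpa using this
    rw [hsq]
    exact Dvd.dvd.mul_right (by omega) _
  have hprm : ∀ p : ℕ, p.Prime → p ∣ m → p ∣ a - 1 := by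
    intro p hp hpm
    rcases (Nat.Prime.dvd_mul hp).mp hpm with h | h
    · exact h.trans hda
    · exact (hvd p hp h).trans hda
  have K := key_iff m a hm2 ha2 hprm (fun _ => h4a)
  set g := Nat.gcd (a - 1) m with hgdef
  have hg : g ∣ m := Nat.gcd_dvd_right _ _
  have htpos : 0 < m / g := Nat.div_pos (Nat.le_of_dvd (by omega) hg)
    (Nat.gcd_pos_of_pos_right _ (by omega))
  set t := m / g with htdef
  set F := orderOf ((q : ZMod m)) with hFdef
  have hcast : ((a : ℕ) : ZMod m) = (q : ZMod m) ^ (2 * f) := by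
    rw [hadef]; push_cast; ring
  have hFt : F ∣ 2 * f * t := by
    apply orderOf_dvd_of_pow_eq_one
    rw [pow_mul, ← hcast]
    exact (K t).mpr dvd_rfl
  have hFpos : 0 < F := by
    rcases Nat.eq_zero_or_pos F with h0 | h
    · exfalso
      have := Nat.eq_zero_of_zero_dvd (h0 ▸ hFt)
      have : 2 * f * t ≠ 0 := by positivity
      omega
    · exact h
  have hdm : d ∣ m := Dvd.intro v rfl
  have hmF : m ∣ q ^ F - 1 := (cast_pow_eq_one_iff q m F (by omega)).mp (pow_orderOf_eq_one _)
  have hfF : f ∣ F := by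
    apply orderOf_dvd_of_pow_eq_one
    exact (cast_pow_eq_one_iff q d F (by omega)).mpr (hdm.trans hmF)
  have h2F : 2 ∣ F := by
    by_contra h
    have hFodd : Odd F := Nat.odd_iff.mpr (by omega)
    have h1 : q ^ F % 4 = 3 := pow_mod4 q F hq4 hFodd
    have h2' : 4 ∣ q ^ F - 1 := dvd_trans h4m hmF
    have : 1 ≤ q ^ F := Nat.one_le_pow _ _ (by omega)
    omega
  have h2fF : 2 * f ∣ F :=
    (Nat.coprime_two_left.mpr hf).mul_dvd_of_dvd_of_dvd h2F hfF
  obtain ⟨s, hs⟩ := h2fF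
  have hts : t ∣ s := by
    apply (K s).mp
    rw [hcast, ← pow_mul, ← hs]
    exact pow_orderOf_eq_one _
  have hFeq : F = 2 * f * t := Nat.dvd_antisymm hFt (hs ▸ mul_dvd_mul_left (2 * f) hts)
  rw [hFeq, htdef, mul_assoc (2 * f) d v, ← hmdef, Nat.mul_div_assoc _ hg]
end

section
/- Let $q$ be a prime power, $K = \mathbb{F}_q(T)$, and $a \in K^\times$. Let $n \geq 1$ with $p \nmid n$, where $p$ is the characteristic. If $K(a^{1/n})$ is a constant field extension of $K$ (i.e., $K(a^{1/n}) = (K(a^{1/n}) \cap \overline{\mathbb{F}}_q) \cdot K$), then there exist $\mu \in \mathbb{F}_q^\times$ and $b \in K^\times$ such that $a = \mu b^n$. -/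
/-!
Every element of `K(x)` that is algebraic over `F` lies in the algebraic closure `E` of `F` inside
`K̄`, so `x` lies in the image of the embedding `E(X) → K̄`, and `a` becomes an `n`-th power `u ^ n`
in `E(X)`. Comparing reduced fractions, the monic denominator of `a` and the monic normalisation of
its numerator are `n`-th powers of monic polynomials over `E`. Monic `n`-th roots are unique, hence
fixed by `Gal(E/F)` (the extension is Galois because `F` is perfect), hence defined over `F`.
-/

open Polynomial

namespace Polynomial

variable {F E : Type*} [Field F] [Field E]

theorem Monic.eq_of_pow_eq_pow {s t : E[X]} (hs : s.Monic) (ht : t.Monic) {n : ℕ} (hn : n ≠ 0)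
    (h : s ^ n = t ^ n) : s = t :=
  eq_of_monic_of_associated hs ht <| associated_of_dvd_dvd
    ((IsIntegrallyClosed.pow_dvd_pow_iff hn).1 h.dvd)
    ((IsIntegrallyClosed.pow_dvd_pow_iff hn).1 h.symm.dvd)

variable [Algebra F E] [IsGalois F E]

theorem exists_eq_pow_of_map_eq_monic_pow {n : ℕ} (hn : n ≠ 0) {f : F[X]} {s : E[X]}
    (hs : s.Monic) (h : f.map (algebraMap F E) = s ^ n) : ∃ g : F[X], f = g ^ n := by
  have hfixed (σ : Gal(E/F)) : s.map σ = s := by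
    refine (hs.map _).eq_of_pow_eq_pow hs hn ?_
    rw [← Polynomial.map_pow, ← h, map_map]
    exact congr_arg (f.map ·) (AlgHom.comp_algebraMap (σ : E →ₐ[F] E))
  have hlifts : s ∈ lifts (algebraMap F E) := (lifts_iff_coeff_lifts s).2 fun i ↦
    (InfiniteGalois.mem_range_algebraMap_iff_fixed _).2 fun σ ↦ by
      simpa using congr_arg (coeff · i) (hfixed σ)
  obtain ⟨g, rfl⟩ := hlifts
  exact ⟨g, map_injective _ (algebraMap F E).injective <| by
    rw [h, coe_mapRingHom, Polynomial.map_pow]⟩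

theorem exists_eq_C_mul_pow_of_map_eq_pow {n : ℕ} (hn : n ≠ 0) {f : F[X]} {s : E[X]}
    (h : f.map (algebraMap F E) = s ^ n) : ∃ c : F, ∃ g : F[X], f = C c * g ^ n := by
  rcases eq_or_ne f 0 with rfl | hf
  · exact ⟨0, 0, by simp⟩
  have hs : s ≠ 0 := by
    rintro rfl
    exact hf ((Polynomial.map_eq_zero_iff (algebraMap F E).injective).1 (h.trans (zero_pow hn)))
  have hlc : algebraMap F E f.leadingCoeff = s.leadingCoeff ^ n := by
    rw [← leadingCoeff_map_of_injective (algebraMap F E).injective, h, leadingCoeff_pow]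
  obtain ⟨g, hg⟩ := exists_eq_pow_of_map_eq_monic_pow hn (monic_mul_leadingCoeff_inv hs)
    (f := f * C f.leadingCoeff⁻¹) (by
      rw [Polynomial.map_mul, map_C, map_inv₀, hlc, h, mul_pow, ← C_pow, inv_pow])
  refine ⟨f.leadingCoeff, g, ?_⟩
  rw [← hg, mul_left_comm, ← C_mul, mul_inv_cancel₀ (leadingCoeff_ne_zero.2 hf), C_1, mul_one]

end Polynomial

namespace RatFunc

variable {K : Type*} [Field K]

theorem num_eq_and_denom_eq_of_isCoprime {x : RatFunc K} {p q : K[X]} (hpq : IsCoprime p q)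
    (hq : q.Monic) (hx : x = algebraMap _ _ p / algebraMap _ _ q) :
    x.num = p ∧ x.denom = q := by
  have hcross : x.num * q = p * x.denom := by
    have h := (num_div_denom x).trans hx
    rw [div_eq_div_iff (algebraMap_ne_zero (denom_ne_zero x)) (algebraMap_ne_zero hq.ne_zero),
      ← map_mul, ← map_mul] at h
    exact algebraMap_injective K h
  have hdenom : x.denom = q := eq_of_monic_of_associated x.monic_denom hq <| associated_of_dvd_dvd
    (x.isCoprime_num_denom.symm.dvd_of_dvd_mul_left ⟨p, by rw [hcross, mul_comm]⟩)
    (hpq.symm.dvd_of_dvd_mul_left ⟨x.num, by rw [← hcross, mul_comm]⟩)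
  refine ⟨mul_right_cancel₀ hq.ne_zero ?_, hdenom⟩
  rw [hcross, hdenom]

variable (F E : Type*) [Field F] [Field E] [Algebra F E]

noncomputable def extendConstants : RatFunc F →+* RatFunc E :=
  mapRingHom (Polynomial.mapRingHom (algebraMap F E)) <|
    nonZeroDivisors_le_comap_nonZeroDivisors_of_injective _ <|
      Polynomial.map_injective _ (algebraMap F E).injective

variable {F E}

theorem extendConstants_apply (a : RatFunc F) :
    extendConstants F E a =
      algebraMap _ _ (a.num.map (algebraMap F E)) /
        algebraMap _ _ (a.denom.map (algebraMap F E)) := by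
  rw [extendConstants, coe_mapRingHom_eq_coe_map, map_apply, Polynomial.coe_mapRingHom]

theorem extendConstants_algebraMap (p : F[X]) :
    extendConstants F E (algebraMap _ _ p) = algebraMap _ _ (p.map (algebraMap F E)) := by
  simp [extendConstants_apply]

theorem exists_eq_C_mul_pow_of_extendConstants_eq_pow [IsGalois F E] {n : ℕ} (hn : n ≠ 0)
    (a : (RatFunc F)ˣ) {u : RatFunc E} (h : u ^ n = extendConstants F E a) :
    ∃ μ : Fˣ, ∃ b : (RatFunc F)ˣ, (a : RatFunc F) = algebraMap F _ μ * b ^ n := by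
  obtain ⟨hnum, hdenom⟩ := num_eq_and_denom_eq_of_isCoprime
    ((a : RatFunc F).isCoprime_num_denom.map (Polynomial.mapRingHom (algebraMap F E)))
    ((a : RatFunc F).monic_denom.map _) (extendConstants_apply _)
  obtain ⟨hnum', hdenom'⟩ := num_eq_and_denom_eq_of_isCoprime (x := u ^ n)
    (u.isCoprime_num_denom.pow (m := n)) (u.monic_denom.pow n)
    (by rw [map_pow, map_pow, ← div_pow, num_div_denom])
  rw [h, hnum] at hnum'
  rw [h, hdenom] at hdenom'
  obtain ⟨c, g, hg⟩ := Polynomial.exists_eq_C_mul_pow_of_map_eq_pow hn hnum'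
  obtain ⟨k, hk⟩ := Polynomial.exists_eq_pow_of_map_eq_monic_pow hn u.monic_denom hdenom'
  have hnum0 : (a : RatFunc F).num ≠ 0 := num_ne_zero a.ne_zero
  have hc0 : c ≠ 0 := by
    rintro rfl
    exact hnum0 (by rw [hg, C_0, zero_mul])
  have hg0 : g ≠ 0 := by
    rintro rfl
    exact hnum0 (by rw [hg, zero_pow hn, mul_zero])
  have hk0 : k ≠ 0 := by
    rintro rfl
    exact (a : RatFunc F).denom_ne_zero (by rw [hk, zero_pow hn])
  refine ⟨Units.mk0 c hc0,
    Units.mk0 (algebraMap _ _ g / algebraMap _ _ k) (div_ne_zero (algebraMap_ne_zero hg0)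
      (algebraMap_ne_zero hk0)), ?_⟩
  rw [Units.val_mk0, Units.val_mk0, ← num_div_denom (a : RatFunc F), hg, hk]
  simp only [map_mul, map_pow, algebraMap_C, algebraMap_eq_C, mul_div_assoc, div_pow]

variable {F L : Type*} [Field F] [Field L] [Algebra (RatFunc F) L] [Algebra F L]
  [IsScalarTower F (RatFunc F) L] (E : IntermediateField F L) [Algebra.IsAlgebraic F E]

theorem transcendental_algebraMap_X : Transcendental E (algebraMap (RatFunc F) L X) := by
  have hF : Transcendental F (algebraMap (RatFunc F) L X) := by
    rw [transcendental_algebraMap_iff (algebraMap (RatFunc F) L).injective]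
    exact transcendental_X
  exact fun h ↦ hF (h.restrictScalars F)

noncomputable def liftConstants : RatFunc E →+* L :=
  liftRingHom (aeval (algebraMap (RatFunc F) L X)).toRingHom <|
    nonZeroDivisors_le_comap_nonZeroDivisors_of_injective _ <|
      transcendental_iff_injective.1 (transcendental_algebraMap_X E)

theorem liftConstants_algebraMap (p : E[X]) :
    liftConstants E (algebraMap _ _ p) = aeval (algebraMap (RatFunc F) L X) p :=
  liftRingHom_algebraMap _ _ p

theorem liftConstants_extendConstants (z : RatFunc F) :
    liftConstants E (extendConstants F E z) = algebraMap (RatFunc F) L z := by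
  suffices (liftConstants E).comp (extendConstants F E) = algebraMap (RatFunc F) L from
    congr($this z)
  refine IsLocalization.ringHom_ext (nonZeroDivisors F[X]) (Polynomial.ringHom_ext (fun c ↦ ?_) ?_)
  · rw [RingHom.comp_apply, RingHom.comp_apply, RingHom.comp_apply, extendConstants_algebraMap,
      liftConstants_algebraMap, Polynomial.map_C, aeval_C, algebraMap_C, ← algebraMap_eq_C,
      ← IsScalarTower.algebraMap_apply, ← IsScalarTower.algebraMap_apply]
  · rw [RingHom.comp_apply, RingHom.comp_apply, RingHom.comp_apply, extendConstants_algebraMap,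
      liftConstants_algebraMap, Polynomial.map_X, aeval_X, algebraMap_X]

theorem exists_liftConstants_eq_of_mem_adjoin {x : L}
    (hx : x ∈ IntermediateField.adjoin (RatFunc F) (E : Set L)) :
    ∃ u, liftConstants E u = x := by
  let range : IntermediateField (RatFunc F) L := (liftConstants E).fieldRange.toIntermediateField
    fun z ↦ ⟨extendConstants F E z, liftConstants_extendConstants E z⟩
  have hE : (E : Set L) ⊆ range := fun e he ↦
    ⟨algebraMap E[X] _ (Polynomial.C ⟨e, he⟩), by rw [liftConstants_algebraMap, aeval_C]; rfl⟩
  exact IntermediateField.adjoin_le_iff.2 hE hx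

end RatFunc

theorem stmt_8_general (F : Type*) [Field F] [Fintype F] (n : ℕ) (hn : 1 ≤ n)
    (a : (RatFunc F)ˣ) (x : AlgebraicClosure (RatFunc F))
    (hx : x ^ n = algebraMap (RatFunc F) (AlgebraicClosure (RatFunc F)) (a : RatFunc F))
    (hconst : IntermediateField.adjoin (RatFunc F) {x} =
      IntermediateField.adjoin (RatFunc F)
        {y : AlgebraicClosure (RatFunc F) |
          IsAlgebraic F y ∧ y ∈ IntermediateField.adjoin (RatFunc F) {x}}) :
    ∃ μ : Fˣ, ∃ b : (RatFunc F)ˣ,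
      (a : RatFunc F) = algebraMap F (RatFunc F) (μ : F) * (b : RatFunc F) ^ n := by
  let E := algebraicClosure F (AlgebraicClosure (RatFunc F))
  have hxE : x ∈ IntermediateField.adjoin (RatFunc F) (E : Set _) :=
    IntermediateField.adjoin.mono _ _ _ (fun y hy ↦ mem_algebraicClosure_iff.2 hy.1)
      (hconst ▸ IntermediateField.mem_adjoin_simple_self _ x)
  obtain ⟨u, rfl⟩ := RatFunc.exists_liftConstants_eq_of_mem_adjoin E hxE
  have hu : u ^ n = RatFunc.extendConstants F E a := (RatFunc.liftConstants E).injective <| by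
    rw [map_pow, hx, RatFunc.liftConstants_extendConstants]
  exact RatFunc.exists_eq_C_mul_pow_of_extendConstants_eq_pow (by omega) a hu

theorem stmt_8 (F : Type*) [Field F] [Fintype F] (n : ℕ) (hn : 1 ≤ n)
    (hp : ¬ (ringChar F ∣ n))
    (a : (RatFunc F)ˣ) (x : AlgebraicClosure (RatFunc F))
    (hx : x ^ n = algebraMap (RatFunc F) (AlgebraicClosure (RatFunc F)) (a : RatFunc F))
    (hconst : IntermediateField.adjoin (RatFunc F) {x} =
      IntermediateField.adjoin (RatFunc F)
        {y : AlgebraicClosure (RatFunc F) |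
          IsAlgebraic F y ∧ y ∈ IntermediateField.adjoin (RatFunc F) {x}}) :
    ∃ μ : Fˣ, ∃ b : (RatFunc F)ˣ,
      (a : RatFunc F) = algebraMap F (RatFunc F) (μ : F) * (b : RatFunc F) ^ n :=
  stmt_8_general F n hn a x hx hconst
end

section
/- Let $q$ be a prime power, $n \geq 1$ with $\gcd(n, q) = 1$, $d \mid n$, and $\mu \in \mathbb{F}_q^\times$. Let $\zeta_n$ be a primitive $n$-th root of unity in $\overline{\mathbb{F}}_q$ and $\mu^{1/d}$ a $d$-th root of $\mu$ in $\overline{\mathbb{F}}_q$. Then $[\mathbb{F}_q(\zeta_n, \mu^{1/d}) : \mathbb{F}_q] = \dfrac{\mathrm{ord}_n(q) \cdot d}{\gcd(\mathrm{ind}_{\mathbb{F}_q(\zeta_n)^\times}(\mu),\ d)}$, where $\mathrm{ind}_{G}(\mu)$ denotes the index of the cyclic subgroup generated by $\mu$ in the cyclic group $G$, i.e., $\mathrm{ind}_{\mathbb{F}_q(\zeta_n)^\times}(\mu) = (q^{\mathrm{ord}_n(q)} - 1)/\mathrm{ord}(\mu)$. -/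
/-!
Inside `F̄`, the field `F(S)` has degree dividing `j` over `F` iff every `s ∈ S` is fixed by
`x ↦ x ^ q ^ j`. For `ζ` this means `n ∣ q ^ j - 1`, i.e. `k := ord_n(q) ∣ j`. Write `j = k c` and
`Q = q ^ k - 1`. Since `d` and `ord μ` divide `Q`, we get `m ^ Q = μ ^ (Q / d)` and `m ^ (Q ^ 2) = 1`,
so `q ^ (k c) - 1 ≡ c Q [MOD Q ^ 2]` turns `m ^ q ^ (k c) = m` into `(μ ^ (Q / d)) ^ c = 1`. The order
of `μ ^ (Q / d)` is `ord μ / gcd (ord μ) (Q / d) = d / gcd (Q / ord μ) d`.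
-/

open IntermediateField Module FiniteField

lemma FiniteField.frobeniusAlgHom_pow_apply {F R : Type*} [Field F] [Fintype F] [CommRing R]
    [Algebra F R] (j : ℕ) (x : R) : (frobeniusAlgHom F R ^ j) x = x ^ Fintype.card F ^ j := by
  rw [AlgHom.coe_pow, coe_frobeniusAlgHom, pow_iterate]

theorem FiniteField.finrank_adjoin_dvd_iff {F L : Type*} [Field F] [Fintype F] [Field L]
    [Algebra F L] (S : Set L) [FiniteDimensional F (adjoin F S)] (j : ℕ) :
    finrank F (adjoin F S) ∣ j ↔ ∀ s ∈ S, s ^ Fintype.card F ^ j = s := by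
  have : Finite (adjoin F S) := Module.finite_of_finite F
  rw [← orderOf_frobeniusAlgHom, orderOf_dvd_iff_pow_eq_one]
  constructor
  · intro h s hs
    simpa [frobeniusAlgHom_pow_apply] using congrArg Subtype.val
      (AlgHom.congr_fun h ⟨s, subset_adjoin F S hs⟩)
  · intro h
    refine adjoin_algHom_ext F fun s hs ↦ Subtype.ext ?_
    simp [frobeniusAlgHom_pow_apply, h s hs]

lemma ZMod.orderOf_natCast_dvd_iff {q : ℕ} (hq : 0 < q) (c j : ℕ) :
    orderOf (q : ZMod c) ∣ j ↔ c ∣ q ^ j - 1 := by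
  rw [orderOf_dvd_iff_pow_eq_one, ← Nat.cast_pow, ← ZMod.natCast_eq_zero_iff,
    Nat.cast_sub (Nat.one_le_pow _ _ hq), Nat.cast_one, sub_eq_zero]

lemma ZMod.orderOf_natCast_pos {q n : ℕ} (h : q.Coprime n) : 0 < orderOf (q : ZMod n) := by
  rw [← ZMod.coe_unitOfCoprime q h, orderOf_units]
  exact orderOf_pos _

lemma pow_eq_self_iff_pow_sub_one_eq_one {G₀ : Type*} [GroupWithZero G₀] {x : G₀} (hx : x ≠ 0)
    {b : ℕ} (hb : 0 < b) : x ^ b = x ↔ x ^ (b - 1) = 1 := by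
  conv_lhs => rw [← Nat.sub_add_cancel hb, pow_succ]
  exact mul_eq_right₀ hx

lemma Nat.pow_sub_one_modEq_mul {a : ℕ} (ha : 0 < a) (c : ℕ) :
    a ^ c - 1 ≡ c * (a - 1) [MOD (a - 1) ^ 2] := by
  have h := sq_dvd_add_pow_sub_sub ((a : ℤ) - 1) 1 c
  rw [Nat.modEq_iff_dvd]
  push_cast [Nat.one_le_pow _ _ ha, ha]
  rw [← dvd_neg]
  convert h using 1
  ring

lemma Nat.div_gcd_div_eq_mul_div_gcd_mul {r d Q : ℕ} (hd : d ∣ Q) (hd0 : d ≠ 0) :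
    r / gcd r (Q / d) = d * r / gcd (d * r) Q := by
  conv_rhs => rw [← Nat.mul_div_cancel' hd, Nat.gcd_mul_left]
  exact (Nat.mul_div_mul_left _ _ (Nat.pos_of_ne_zero hd0)).symm

lemma Nat.div_gcd_div_eq_div_gcd_div {r d Q : ℕ} (hr : r ∣ Q) (hd : d ∣ Q) (hQ : Q ≠ 0) :
    r / gcd r (Q / d) = d / gcd (Q / r) d := by
  rw [Nat.gcd_comm (Q / r), div_gcd_div_eq_mul_div_gcd_mul hd (ne_zero_of_dvd_ne_zero hQ hd),
    div_gcd_div_eq_mul_div_gcd_mul hr (ne_zero_of_dvd_ne_zero hQ hr), Nat.mul_comm]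

lemma pow_pow_eq_self_iff_dvd {G₀ : Type*} [GroupWithZero G₀] {x : G₀} (hx : x ≠ 0) {a d : ℕ}
    (ha : 2 ≤ a) (hd : d ∣ a - 1) (hxd : orderOf (x ^ d) ∣ a - 1) (c : ℕ) :
    x ^ a ^ c = x ↔ d / Nat.gcd ((a - 1) / orderOf (x ^ d)) d ∣ c := by
  set Q := a - 1
  set y := x ^ d
  have hQ0 : Q ≠ 0 := by omega
  have hxQ : x ^ Q = y ^ (Q / d) := by rw [← pow_mul, Nat.mul_div_cancel' hd]
  have hyQ : y ^ Q = 1 := orderOf_dvd_iff_pow_eq_one.1 hxd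
  have hxQ2 : x ^ Q ^ 2 = 1 := by
    rw [sq, pow_mul, hxQ, ← pow_mul, mul_comm, pow_mul, hyQ, one_pow]
  have hy : IsOfFinOrder y := isOfFinOrder_iff_pow_eq_one.2 ⟨Q, Nat.pos_of_ne_zero hQ0, hyQ⟩
  rw [pow_eq_self_iff_pow_sub_one_eq_one hx (by positivity), ← orderOf_dvd_iff_pow_eq_one,
    (Nat.pow_sub_one_modEq_mul (by omega) c).dvd_iff (orderOf_dvd_of_pow_eq_one hxQ2),
    orderOf_dvd_iff_pow_eq_one, mul_comm, pow_mul, hxQ, ← orderOf_dvd_iff_pow_eq_one,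
    hy.orderOf_pow, Nat.div_gcd_div_eq_div_gcd_div hxd hd hQ0]

theorem stmt_10 (F : Type*) [Field F] [Fintype F] (q n d : ℕ)
    (hq : Fintype.card F = q) (hn : 1 ≤ n) (hco : Nat.Coprime n q) (hd : d ∣ n)
    (μ : Fˣ) (ζ m : AlgebraicClosure F) (hζ : IsPrimitiveRoot ζ n)
    (hm : m ^ d = algebraMap F (AlgebraicClosure F) (μ : F)) :
    Module.finrank F (IntermediateField.adjoin F {ζ, m} :
        IntermediateField F (AlgebraicClosure F)) =
      orderOf ((q : ZMod n)) * d /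
        Nat.gcd ((q ^ orderOf ((q : ZMod n)) - 1) / orderOf μ) d := by
  set k := orderOf (q : ZMod n)
  have hq2 : 2 ≤ q := hq ▸ Fintype.one_lt_card
  have hk : 0 < k := ZMod.orderOf_natCast_pos hco.symm
  have hqk : 2 ≤ q ^ k := hq2.trans (Nat.le_self_pow hk.ne' q)
  have hnQ : n ∣ q ^ k - 1 := (ZMod.orderOf_natCast_dvd_iff (by omega) n k).1 dvd_rfl
  have hζ_iff (j : ℕ) : ζ ^ q ^ j = ζ ↔ k ∣ j := by
    rw [pow_eq_self_iff_pow_sub_one_eq_one (hζ.ne_zero (by omega)) (by positivity),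
      hζ.pow_eq_one_iff_dvd, ZMod.orderOf_natCast_dvd_iff (by omega)]
  have hmd : orderOf (m ^ d) = orderOf μ := by
    rw [hm, ← orderOf_units, ← orderOf_injective (algebraMap F (AlgebraicClosure F)).toMonoidHom
      (algebraMap F (AlgebraicClosure F)).injective]
    rfl
  have hμQ : orderOf μ ∣ q ^ k - 1 :=
    (orderOf_dvd_natCard μ).trans <| by
      rw [Nat.card_units, Nat.card_eq_fintype_card, hq]; exact Nat.sub_one_dvd_pow_sub_one q k
  have hm0 : m ≠ 0 := ne_zero_pow (n := d) (by rintro rfl; omega) (by simp [hm])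
  have hm_iff (c : ℕ) : m ^ q ^ (k * c) = m ↔ d / Nat.gcd ((q ^ k - 1) / orderOf μ) d ∣ c := by
    rw [pow_mul, pow_pow_eq_self_iff_dvd hm0 hqk (hd.trans hnQ) (hmd ▸ hμQ), hmd]
  have : FiniteDimensional F (IntermediateField.adjoin F {ζ, m}) :=
    IntermediateField.finiteDimensional_adjoin fun x _ ↦ Algebra.IsIntegral.isIntegral x
  rw [Nat.mul_div_assoc _ (Nat.gcd_dvd_right _ _)]
  refine Nat.dvd_right_iff_eq.mp fun j ↦ ?_
  simp only [finrank_adjoin_dvd_iff, hq, Set.mem_insert_iff, Set.mem_singleton_iff,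
    forall_eq_or_imp, forall_eq, hζ_iff]
  constructor
  · rintro ⟨⟨c, rfl⟩, hmc⟩
    exact mul_dvd_mul_left k ((hm_iff c).1 hmc)
  · intro h
    obtain ⟨c, rfl⟩ := dvd_of_mul_right_dvd h
    exact ⟨dvd_mul_right k c, (hm_iff c).2 (Nat.dvd_of_mul_dvd_mul_left hk h)⟩
end

section
/- Let $G$ be a finite cyclic group of order $N$, let $\mu \in G$ with index $u = N/\mathrm{ord}(\mu)$, and let $d \mid N$. Set $d_0 = d/\gcd(d, u)$. If $v \in G$ satisfies $v^{\gcd(u,d)} = \mu$, then for every prime $l \mid d_0$, $v$ is not an $l$-th power in $G$. -/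
lemma keyNat (N d u b l : ℕ) (hN : 0 < N) (hd : d ∣ N) (hl : l.Prime)
    (hld : l ∣ d / Nat.gcd d u) (hu : u = Nat.gcd N (b * l * Nat.gcd u d)) : False := by
  have hNne : N ≠ 0 := hN.ne'
  have hdne : d ≠ 0 := by rintro rfl; exact hNne (Nat.eq_zero_of_zero_dvd hd)
  have hune : u ≠ 0 := by
    rintro h
    rw [h] at hu
    exact hNne (Nat.eq_zero_of_gcd_eq_zero_left hu.symm)
  have hlne : l ≠ 0 := hl.ne_zero
  have hgne : Nat.gcd u d ≠ 0 := fun h => hune (Nat.eq_zero_of_gcd_eq_zero_left h)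
  have hvdN : d.factorization l ≤ N.factorization l :=
    (Nat.factorization_le_iff_dvd hdne hNne).mpr hd l
  have hcl : Nat.gcd d u * l ∣ d := (Nat.dvd_div_iff_mul_dvd (Nat.gcd_dvd_left d u)).mp hld
  have h1 : min (d.factorization l) (u.factorization l) + 1 ≤ d.factorization l := by
    have := (Nat.factorization_le_iff_dvd
      (Nat.mul_ne_zero (by rwa [Nat.gcd_comm] at hgne) hlne) hdne).mpr hcl l
    rwa [Nat.factorization_mul (by rwa [Nat.gcd_comm] at hgne) hlne, Finsupp.add_apply,
      Nat.factorization_gcd hdne hune, Finsupp.inf_apply, hl.factorization_self] at this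
  have hvud : u.factorization l < d.factorization l := by omega
  rcases Nat.eq_zero_or_pos b with rfl | hb
  · simp only [Nat.zero_mul, Nat.gcd_zero_right] at hu
    rw [hu] at hvud
    omega
  · have hαne : b * l * Nat.gcd u d ≠ 0 := Nat.mul_ne_zero (Nat.mul_ne_zero hb.ne' hlne) hgne
    have h2 : u.factorization l
        = min (N.factorization l) ((b * l * Nat.gcd u d).factorization l) := by
      conv_lhs => rw [hu]
      rw [Nat.factorization_gcd hNne hαne, Finsupp.inf_apply]
    have h3 : u.factorization l + 1 ≤ (b * l * Nat.gcd u d).factorization l := by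
      rw [Nat.factorization_mul (Nat.mul_ne_zero hb.ne' hlne) hgne,
        Nat.factorization_mul hb.ne' hlne, Finsupp.add_apply, Finsupp.add_apply,
        hl.factorization_self, Nat.factorization_gcd hune hdne, Finsupp.inf_apply]
      have : min (u.factorization l) (d.factorization l) = u.factorization l := by omega
      rw [this]; omega
    omega

theorem stmt_12 (G : Type*) [Group G] [Fintype G] (hc : IsCyclic G)
    (μ v : G) (d : ℕ) (hd : d ∣ Fintype.card G)
    (hv : v ^ Nat.gcd (Fintype.card G / orderOf μ) d = μ) :
    ∀ l : ℕ, l.Prime → l ∣ d / Nat.gcd d (Fintype.card G / orderOf μ) →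
      ¬ ∃ w : G, w ^ l = v := by
  intro l hl hld ⟨w, hw⟩
  obtain ⟨ζ, hζ⟩ := IsCyclic.exists_monoid_generator (α := G)
  obtain ⟨b, hb⟩ := hζ w
  simp only at hb
  have hNpos : 0 < Fintype.card G := Fintype.card_pos
  have hζord : orderOf ζ = Fintype.card G := by
    rw [← Nat.card_eq_fintype_card]
    exact orderOf_eq_card_of_forall_mem_zpowers fun x => by
      obtain ⟨n, hn⟩ := hζ x
      exact ⟨n, by simpa using hn⟩
  set N := Fintype.card G with hN
  set u := N / orderOf μ with hu'
  set g := Nat.gcd u d with hg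
  have hμ : μ = ζ ^ (b * l * g) := by
    simp only [pow_mul]
    rw [hb, hw, hv]
  have hordμ : orderOf μ = N / Nat.gcd N (b * l * g) := by
    rw [hμ, orderOf_pow, hζord]
  have hueq : u = Nat.gcd N (b * l * g) := by
    rw [hu', hordμ, Nat.div_div_self (Nat.gcd_dvd_left _ _) hNpos.ne']
  exact keyNat N d u b l hNpos hd hl hld hueq
end

section
/- For every integer $d \geq 2$ there exists a constant $C > 0$ such that for all real $x \geq e^{2\omega(d)}$, $\displaystyle\sum_{\substack{w \mid d^\infty \\ w > x}} \frac{1}{w} \leq C \cdot \frac{(\log x)^{\omega(d)}}{x}$, where the sum is over positive integers $w > x$ all of whose prime factors divide $d$. -/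
/-! Rankin's trick: for `0 < ε ≤ 1` and `w ≥ x` one has `1 / w ≤ x ^ (ε - 1) * w ^ (-ε)`,
so the tail is at most `x ^ (ε - 1)` times the full Euler product
`∏_{p ∣ d} (1 - p ^ (-ε))⁻¹`. Since `1 - e^{-t} ≥ t e^{-t}`, each Euler factor is at most
`p / (ε log 2)`, and the choice `ε = 1 / log x` makes `x ^ (ε - 1) = e / x` while each factor
costs only `O(log x)`. -/

open Real Finset

namespace Nat

noncomputable def rpowNegHom (ε : ℝ) : ℕ →* ℝ where
  toFun n := (n : ℝ) ^ (-ε)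
  map_one' := by simp
  map_mul' m n := by push_cast; exact mul_rpow m.cast_nonneg n.cast_nonneg

lemma cast_rpow_neg_lt_one {p : ℕ} (hp : 1 < p) {ε : ℝ} (hε : 0 < ε) :
    (p : ℝ) ^ (-ε) < 1 :=
  rpow_lt_one_of_one_lt_of_neg (mod_cast hp) (neg_neg_iff_pos.mpr hε)

lemma hasSum_factoredNumbers_rpow_neg (s : Finset ℕ) {ε : ℝ} (hε : 0 < ε) :
    HasSum (fun m : factoredNumbers s ↦ (m : ℝ) ^ (-ε))
      (∏ p ∈ s with p.Prime, (1 - (p : ℝ) ^ (-ε))⁻¹) := by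
  refine (EulerProduct.summable_and_hasSum_factoredNumbers_prod_filter_prime_geometric
    (f := rpowNegHom ε) (fun {p} hp ↦ ?_) s).2
  change ‖(p : ℝ) ^ (-ε)‖ < 1
  rw [norm_of_nonneg (rpow_nonneg p.cast_nonneg _)]
  exact cast_rpow_neg_lt_one hp.one_lt hε

lemma mem_factoredNumbers_primeFactors {d w : ℕ} (hd : d ≠ 0) (hw : w ≠ 0)
    (h : ∀ l : ℕ, l.Prime → l ∣ w → l ∣ d) : w ∈ factoredNumbers d.primeFactors :=
  mem_factoredNumbers_of_primeFactors_subset hw fun _ hl ↦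
    mem_primeFactors.mpr ⟨prime_of_mem_primeFactors hl, h _ (prime_of_mem_primeFactors hl)
      (dvd_of_mem_primeFactors hl), hd⟩

end Nat

lemma one_div_le_rpow_sub_one_mul_rpow_neg {x w ε : ℝ} (hx : 0 < x) (hxw : x ≤ w)
    (hε : ε ≤ 1) : 1 / w ≤ x ^ (ε - 1) * w ^ (-ε) := by
  have hw : 0 < w := hx.trans_le hxw
  calc 1 / w = w ^ (ε - 1) * w ^ (-ε) := by
        rw [← rpow_add hw, show ε - 1 + -ε = -1 by ring, rpow_neg_one, one_div]
    _ ≤ x ^ (ε - 1) * w ^ (-ε) :=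
        mul_le_mul_of_nonneg_right (rpow_le_rpow_of_nonpos hx hxw (by linarith)) (by positivity)

theorem tsum_one_div_le_rpow_mul_prod {s : Finset ℕ} {P : ℕ → Prop} {x ε : ℝ} (hx : 0 < x)
    (hε₀ : 0 < ε) (hε₁ : ε ≤ 1)
    (hP : ∀ w, P w → w ∈ Nat.factoredNumbers s ∧ x ≤ w) :
    ∑' w : {w // P w}, (1 : ℝ) / w
      ≤ x ^ (ε - 1) * ∏ p ∈ s with p.Prime, (1 - (p : ℝ) ^ (-ε))⁻¹ := by
  set g : Nat.factoredNumbers s → ℝ := fun m ↦ x ^ (ε - 1) * (m : ℝ) ^ (-ε)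
  have hg : HasSum g (x ^ (ε - 1) * ∏ p ∈ s with p.Prime, (1 - (p : ℝ) ^ (-ε))⁻¹) :=
    (Nat.hasSum_factoredNumbers_rpow_neg s hε₀).mul_left _
  let e : {w // P w} → Nat.factoredNumbers s := fun w ↦ ⟨w, (hP w w.2).1⟩
  have he : Function.Injective e := fun a b h ↦ Subtype.ext (congrArg Subtype.val h :)
  have hle : ∀ w, (1 : ℝ) / w ≤ g (e w) := fun w ↦
    one_div_le_rpow_sub_one_mul_rpow_neg hx (hP w w.2).2 hε₁
  have hsum : Summable fun w : {w // P w} ↦ (1 : ℝ) / w :=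
    .of_nonneg_of_le (fun _ ↦ by positivity) hle (hg.summable.comp_injective he)
  exact hasSum_le_inj e he (fun m _ ↦ by positivity) hle hsum.hasSum hg

lemma inv_one_sub_exp_neg_le {t : ℝ} (ht : 0 < t) : (1 - exp (-t))⁻¹ ≤ exp t / t := by
  have key : t * exp (-t) ≤ 1 - exp (-t) := by
    have h := mul_le_mul_of_nonneg_right (add_one_le_exp t) (exp_pos (-t)).le
    rw [← exp_add, add_neg_cancel, exp_zero] at h
    linarith
  calc (1 - exp (-t))⁻¹ ≤ (t * exp (-t))⁻¹ := inv_anti₀ (by positivity) key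
    _ = exp t / t := by rw [exp_neg, mul_inv, inv_inv, div_eq_inv_mul]

lemma inv_one_sub_rpow_neg_le {p ε : ℝ} (hp : 2 ≤ p) (hε₀ : 0 < ε) (hε₁ : ε ≤ 1) :
    (1 - p ^ (-ε))⁻¹ ≤ p / (ε * log 2) := by
  have hlog2 : 0 < log 2 := log_pos one_lt_two
  have hlogp : log 2 ≤ log p := log_le_log two_pos hp
  have ht : 0 < ε * log p := mul_pos hε₀ (hlog2.trans_le hlogp)
  have hpt : p ^ (-ε) = exp (-(ε * log p)) := by
    rw [rpow_def_of_pos (by linarith)]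
    ring_nf
  rw [hpt]
  refine (inv_one_sub_exp_neg_le ht).trans (div_le_div₀ (by linarith) ?_ (by positivity)
    (by gcongr))
  calc exp (ε * log p) ≤ exp (log p) := by gcongr; nlinarith
    _ = p := exp_log (by linarith)

lemma prod_primeFactors_inv_one_sub_rpow_neg_le {d : ℕ} (hd : d ≠ 0) {ε : ℝ}
    (hε₀ : 0 < ε) (hε₁ : ε ≤ 1) :
    ∏ p ∈ d.primeFactors, (1 - (p : ℝ) ^ (-ε))⁻¹
      ≤ (d / (ε * log 2)) ^ d.primeFactors.card := by
  rw [← prod_const]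
  refine prod_le_prod (fun p hp ↦ ?_) (fun p hp ↦ ?_)
  · have := Nat.cast_rpow_neg_lt_one (Nat.prime_of_mem_primeFactors hp).one_lt hε₀
    exact inv_nonneg.mpr (by linarith)
  · refine (inv_one_sub_rpow_neg_le (mod_cast (Nat.prime_of_mem_primeFactors hp).two_le)
      hε₀ hε₁).trans ?_
    gcongr
    exact_mod_cast Nat.le_of_dvd (Nat.pos_of_ne_zero hd) (Nat.dvd_of_mem_primeFactors hp)

theorem stmt_16 (d : ℕ) (hd : 2 ≤ d) :
    ∃ C : ℝ, 0 < C ∧ ∀ x : ℝ, Real.exp (2 * d.primeFactors.card) ≤ x →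
      (∑' w : {w : ℕ // (∀ l : ℕ, l.Prime → l ∣ w → l ∣ d) ∧ x < (w : ℝ)},
          (1 : ℝ) / (w : ℕ))
        ≤ C * Real.log x ^ d.primeFactors.card / x := by
  set k := d.primeFactors.card
  have hd0 : d ≠ 0 := by omega
  have hk : (1 : ℝ) ≤ k := mod_cast card_pos.mpr (Nat.nonempty_primeFactors.mpr hd)
  refine ⟨exp 1 * (d / log 2) ^ k, by positivity, fun x hx ↦ ?_⟩
  have hlogx : 1 ≤ log x := by
    have := log_le_log (exp_pos _) hx
    rw [log_exp] at this
    linarith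
  have hx0 : 0 < x := (exp_pos _).trans_le hx
  have hε₀ : 0 < (log x)⁻¹ := by positivity
  have hε₁ : (log x)⁻¹ ≤ 1 := inv_le_one_of_one_le₀ hlogx
  have hxε : x ^ ((log x)⁻¹ - 1) = exp 1 / x := by
    rw [rpow_sub hx0, rpow_one, rpow_inv_log hx0 (by rintro rfl; norm_num at hlogx)]
  calc _ ≤ x ^ ((log x)⁻¹ - 1) *
          ∏ p ∈ d.primeFactors with p.Prime, (1 - (p : ℝ) ^ (-(log x)⁻¹))⁻¹ :=
        tsum_one_div_le_rpow_mul_prod hx0 hε₀ hε₁ fun w hw ↦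
          ⟨Nat.mem_factoredNumbers_primeFactors hd0 (by rintro rfl; simp at hw; linarith) hw.1,
            hw.2.le⟩
    _ ≤ exp 1 / x * (d / ((log x)⁻¹ * log 2)) ^ k := by
        rw [hxε, filter_true_of_mem fun p hp ↦ Nat.prime_of_mem_primeFactors hp]
        gcongr
        exact prod_primeFactors_inv_one_sub_rpow_neg_le hd0 hε₀ hε₁
    _ = exp 1 * (d / log 2) ^ k * log x ^ k / x := by
        rw [div_mul_eq_div_div_swap, div_inv_eq_mul, mul_pow, div_pow]
        ring
end
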